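/- arXiv:math/0701510 — 3 statements merged into one kernel-verified Lean document; each statement's English description precedes it below -/
import Mathlib

section
/- Let F = u + i·v be holomorphic on the upper half complex plane, and let f : ℍ → ℍ be the function obtained by Fueter's construction, f(p) = u(t,r) + ι(p)·v(t,r). Then on the set of quaternions with nonzero imaginary part, −(1/2)·Δf = D̄_l(g), where g is the real-valued function g(p) = v(t,r)/r, and moreover −(1/2)·Δf(p) = −(ι(p)/r)·(∂f/∂t)(p) + (ι(p)/r²)·v(t,r). -/
open Quaternion

noncomputable section

/-- The basis quaternion `i`. -/
def qi : ℍ[ℝ] := ⟨0,1,0,0⟩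
/-- The basis quaternion `j`. -/
def qj : ℍ[ℝ] := ⟨0,0,1,0⟩
/-- The basis quaternion `k`. -/
def qk : ℍ[ℝ] := ⟨0,0,0,1⟩

/-- Partial derivative of `f : ℍ → ℍ` in the real (`t`) direction. -/
def pt (f : ℍ[ℝ] → ℍ[ℝ]) (p : ℍ[ℝ]) : ℍ[ℝ] := fderiv ℝ f p 1
/-- Partial derivative in the `i` (`x`) direction. -/
def px (f : ℍ[ℝ] → ℍ[ℝ]) (p : ℍ[ℝ]) : ℍ[ℝ] := fderiv ℝ f p qi
/-- Partial derivative in the `j` (`y`) direction. -/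
def py (f : ℍ[ℝ] → ℍ[ℝ]) (p : ℍ[ℝ]) : ℍ[ℝ] := fderiv ℝ f p qj
/-- Partial derivative in the `k` (`z`) direction. -/
def pz (f : ℍ[ℝ] → ℍ[ℝ]) (p : ℍ[ℝ]) : ℍ[ℝ] := fderiv ℝ f p qk

/-- The left Fueter operator `D_l f = ∂f/∂t + i ∂f/∂x + j ∂f/∂y + k ∂f/∂z`. -/
def Dl (f : ℍ[ℝ] → ℍ[ℝ]) (p : ℍ[ℝ]) : ℍ[ℝ] :=
  pt f p + qi * px f p + qj * py f p + qk * pz f p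
/-- The right Fueter operator `D_r f = ∂f/∂t + (∂f/∂x) i + (∂f/∂y) j + (∂f/∂z) k`. -/
def Dr (f : ℍ[ℝ] → ℍ[ℝ]) (p : ℍ[ℝ]) : ℍ[ℝ] :=
  pt f p + px f p * qi + py f p * qj + pz f p * qk
/-- The conjugate left Fueter operator `D̄_l f = ∂f/∂t - i ∂f/∂x - j ∂f/∂y - k ∂f/∂z`. -/
def Dlbar (f : ℍ[ℝ] → ℍ[ℝ]) (p : ℍ[ℝ]) : ℍ[ℝ] :=
  pt f p - qi * px f p - qj * py f p - qk * pz f p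
/-- The Laplacian `Δf = ∂²f/∂t² + ∂²f/∂x² + ∂²f/∂y² + ∂²f/∂z²`. -/
def Lap (f : ℍ[ℝ] → ℍ[ℝ]) (p : ℍ[ℝ]) : ℍ[ℝ] :=
  pt (pt f) p + px (px f) p + py (py f) p + pz (pz f) p

/-- `r = √(x² + y² + z²)`, the norm of the imaginary part of `p`. -/
def rad (p : ℍ[ℝ]) : ℝ := Real.sqrt (p.imI^2 + p.imJ^2 + p.imK^2)
/-- `ι(p) = (x i + y j + z k)/r`, the normalized imaginary part of `p`. -/
def iot (p : ℍ[ℝ]) : ℍ[ℝ] := (rad p)⁻¹ • Quaternion.im p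

/-!
Write `S G = fueter G` for Fueter's construction applied to `G`, and `v = Im G`, `a = Re G'` at
`t + r i`, so that `f = S F` off the real axis. Because `ι² = -1`,
`w ↦ Re w + (Im w) ι` is an `ℝ`-algebra map `ℂ → ℍ`, and the chain rule gives
`∂_h (S G) = S G' · (Re h + ⟪ι, h⟫ ι) + (v / r) (Im h - ⟪ι, h⟫ ι)`; in particular `∂_t (S G) = S G'`.
Differentiating once more along an imaginary unit `e`, with `c = ⟪ι, e⟫`, and using
the anticommutation `e ι + ι e = -2c`, one finds
`∂_e² (S G) = -c² S G'' + ((1 - c²) / r) (S G' - v / r) ι + (2 (a - v / r) / r) c (e - c ι)`.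
Summing over `e = i, j, k` (where `∑ c² = 1` and `∑ c e = ι`) and adding `∂_t² (S G) = S G''` gives
`Δ (S G) = (2 / r) (S G' - v / r) ι`; both identities follow from this and `ι² = -1`.
-/

open scoped RealInnerProductSpace Topology

namespace Quaternion

def reCLM : ℍ[ℝ] →L[ℝ] ℝ :=
  LinearMap.toContinuousLinearMap
    { toFun := fun a => a.re, map_add' := re_add, map_smul' := fun s a => re_smul a s }

def imCLM : ℍ[ℝ] →L[ℝ] ℍ[ℝ] :=
  LinearMap.toContinuousLinearMap
    { toFun := im, map_add' := im_add, map_smul' := fun s a => im_smul a s }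

@[simp] lemma reCLM_apply (a : ℍ[ℝ]) : reCLM a = a.re := rfl

@[simp] lemma imCLM_apply (a : ℍ[ℝ]) : imCLM a = im a := rfl

lemma im_eq_self_of_re_eq_zero {a : ℍ[ℝ]} (ha : a.re = 0) : im a = a := by
  simpa [ha] using re_add_im a

lemma inner_im_left (a b : ℍ[ℝ]) : ⟪im a, b⟫ = ⟪im a, im b⟫ := by
  simp [inner_def]; ring

lemma mul_add_mul_swap_of_re_eq_zero {a b : ℍ[ℝ]} (ha : a.re = 0) (hb : b.re = 0) :
    a * b + b * a = -(2 * ⟪a, b⟫) • 1 := by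
  ext <;> simp [inner_def, ha, hb] <;> ring

end Quaternion

@[simp] lemma re_qi : qi.re = 0 := rfl
@[simp] lemma imI_qi : qi.imI = 1 := rfl
@[simp] lemma imJ_qi : qi.imJ = 0 := rfl
@[simp] lemma imK_qi : qi.imK = 0 := rfl
@[simp] lemma re_qj : qj.re = 0 := rfl
@[simp] lemma imI_qj : qj.imI = 0 := rfl
@[simp] lemma imJ_qj : qj.imJ = 1 := rfl
@[simp] lemma imK_qj : qj.imK = 0 := rfl
@[simp] lemma re_qk : qk.re = 0 := rfl
@[simp] lemma imI_qk : qk.imI = 0 := rfl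
@[simp] lemma imJ_qk : qk.imJ = 0 := rfl
@[simp] lemma imK_qk : qk.imK = 1 := rfl

@[simp] lemma inner_qi (a : ℍ[ℝ]) : ⟪a, qi⟫ = a.imI := by simp [inner_def]
@[simp] lemma inner_qj (a : ℍ[ℝ]) : ⟪a, qj⟫ = a.imJ := by simp [inner_def]
@[simp] lemma inner_qk (a : ℍ[ℝ]) : ⟪a, qk⟫ = a.imK := by simp [inner_def]

lemma inner_smul_qi_add_qj_add_qk (a : ℍ[ℝ]) :
    ⟪a, qi⟫ • qi + ⟪a, qj⟫ • qj + ⟪a, qk⟫ • qk = im a := by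
  ext <;> simp

lemma inner_qi_sq_add_qj_sq_add_qk_sq (a : ℍ[ℝ]) :
    ⟪a, qi⟫ ^ 2 + ⟪a, qj⟫ ^ 2 + ⟪a, qk⟫ ^ 2 = ‖im a‖ ^ 2 := by
  rw [sq ‖im a‖, ← normSq_eq_norm_mul_self, normSq_def']
  simp

lemma isOpen_setOf_im_ne_zero : IsOpen {q : ℍ[ℝ] | im q ≠ 0} :=
  isOpen_ne_fun continuous_im continuous_const

lemma rad_eq_norm_im (q : ℍ[ℝ]) : rad q = ‖im q‖ := by
  rw [norm_eq_sqrt_real_inner, inner_self, normSq_def', rad]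
  simp

lemma rad_pos {q : ℍ[ℝ]} (hq : im q ≠ 0) : 0 < rad q := by
  rw [rad_eq_norm_im]
  exact norm_pos_iff.2 hq

lemma re_iot (q : ℍ[ℝ]) : (iot q).re = 0 := by simp [iot]

lemma im_iot (q : ℍ[ℝ]) : im (iot q) = iot q := by simp [iot]

lemma norm_iot {q : ℍ[ℝ]} (hq : im q ≠ 0) : ‖iot q‖ = 1 := by
  rw [iot, rad_eq_norm_im, norm_smul, norm_inv, norm_norm, inv_mul_cancel₀ (norm_ne_zero_iff.2 hq)]

lemma iot_mul_self {q : ℍ[ℝ]} (hq : im q ≠ 0) : iot q * iot q = -1 := by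
  rw [← sq, ← im_iot, im_sq, normSq_eq_norm_mul_self, im_iot, norm_iot hq]
  simp

lemma inner_iot_one (q : ℍ[ℝ]) : ⟪iot q, 1⟫ = 0 := by
  simp [inner_def, iot]

lemma hasFDerivAt_rad {q : ℍ[ℝ]} (hq : im q ≠ 0) : HasFDerivAt rad (innerSL ℝ (iot q)) q := by
  have hrad : rad = fun p => √(‖imCLM p‖ ^ 2) := by
    funext p
    rw [imCLM_apply, Real.sqrt_sq (norm_nonneg _), rad_eq_norm_im]
  have hne : ‖imCLM q‖ ^ 2 ≠ 0 := by simpa using hq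
  rw [hrad]
  refine (imCLM.hasFDerivAt.norm_sq.sqrt hne).congr_fderiv (ContinuousLinearMap.ext fun h => ?_)
  simp [iot, rad_eq_norm_im, Real.sqrt_sq (norm_nonneg _)]
  rw [inner_im_left q h]
  ring

lemma hasFDerivAt_rad_inv {q : ℍ[ℝ]} (hq : im q ≠ 0) :
    HasFDerivAt (fun p => (rad p)⁻¹) (-(rad q ^ 2)⁻¹ • innerSL ℝ (iot q)) q :=
  (hasDerivAt_inv (rad_pos hq).ne').comp_hasFDerivAt q (hasFDerivAt_rad hq)

lemma hasFDerivAt_iot {q : ℍ[ℝ]} (hq : im q ≠ 0) :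
    HasFDerivAt iot ((rad q)⁻¹ • (imCLM - (innerSL ℝ (iot q)).smulRight (iot q))) q := by
  refine ((hasFDerivAt_rad_inv hq).smul imCLM.hasFDerivAt).congr_fderiv
    (ContinuousLinearMap.ext fun h => ?_)
  simp only [add_apply, smul_apply, ContinuousLinearMap.smulRight_apply, sub_apply,
    innerSL_apply_apply, imCLM_apply]
  rw [iot]
  module

def sliceCoord (q : ℍ[ℝ]) : ℂ := ⟨q.re, rad q⟩

lemma DifferentiableOn.differentiableAt_sliceCoord {G : ℂ → ℂ}
    (hG : DifferentiableOn ℂ G {z : ℂ | 0 < z.im}) {q : ℍ[ℝ]} (hq : im q ≠ 0) :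
    DifferentiableAt ℂ G (sliceCoord q) :=
  hG.differentiableAt ((isOpen_lt continuous_const Complex.continuous_im).mem_nhds (rad_pos hq))

lemma hasFDerivAt_sliceCoord {q : ℍ[ℝ]} (hq : im q ≠ 0) :
    HasFDerivAt sliceCoord
      (Complex.ofRealCLM.comp reCLM + (innerSL ℝ (iot q)).smulRight Complex.I) q := by
  have : sliceCoord = fun p => (reCLM p : ℂ) + rad p • Complex.I := by
    funext p
    apply Complex.ext <;> simp [sliceCoord]
  rw [this]
  exact (Complex.ofRealCLM.comp reCLM).hasFDerivAt.add ((hasFDerivAt_rad hq).smul_const _)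

lemma hasFDerivAt_comp_sliceCoord {G : ℂ → ℂ} {q : ℍ[ℝ]}
    (hG : DifferentiableAt ℂ G (sliceCoord q)) (hq : im q ≠ 0) :
    HasFDerivAt (fun p => G (sliceCoord p)) (deriv G (sliceCoord q) •
      (Complex.ofRealCLM.comp reCLM + (innerSL ℝ (iot q)).smulRight Complex.I)) q := by
  refine (hG.hasDerivAt.hasFDerivAt.restrictScalars ℝ).comp q (hasFDerivAt_sliceCoord hq)
    |>.congr_fderiv (ContinuousLinearMap.ext fun h => ?_)
  simp [mul_comm]

def sliceEmbed (J : ℍ[ℝ]) (z : ℂ) : ℍ[ℝ] := z.re • 1 + z.im • J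

lemma sliceEmbed_eq_liftAux {J : ℍ[ℝ]} (hJ : J * J = -1) (z : ℂ) :
    sliceEmbed J z = Complex.liftAux J hJ z := by
  rw [Complex.liftAux_apply, Algebra.algebraMap_eq_smul_one, sliceEmbed]

lemma sliceEmbed_mul {J : ℍ[ℝ]} (hJ : J * J = -1) (z w : ℂ) :
    sliceEmbed J (z * w) = sliceEmbed J z * sliceEmbed J w := by
  simp only [sliceEmbed_eq_liftAux hJ, map_mul]

def fueter (G : ℂ → ℂ) (q : ℍ[ℝ]) : ℍ[ℝ] := sliceEmbed (iot q) (G (sliceCoord q))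

lemma fueter_apply (G : ℂ → ℂ) (q : ℍ[ℝ]) :
    fueter G q = (G (sliceCoord q)).re • 1 + (G (sliceCoord q)).im • iot q := rfl

lemma fueter_eq (G : ℂ → ℂ) (q : ℍ[ℝ]) :
    fueter G q = ((G ⟨q.re, rad q⟩).re : ℍ[ℝ]) + iot q * ((G ⟨q.re, rad q⟩).im : ℍ[ℝ]) := by
  rw [fueter, sliceEmbed, mul_coe_eq_smul, ← Algebra.algebraMap_eq_smul_one]
  rfl

def imDivRad (G : ℂ → ℂ) (q : ℍ[ℝ]) : ℝ := (G (sliceCoord q)).im / rad q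

section FirstDerivatives

variable {G : ℂ → ℂ} {q : ℍ[ℝ]} (hG : DifferentiableAt ℂ G (sliceCoord q)) (hq : im q ≠ 0)
include hG hq

lemma differentiableAt_fueter : DifferentiableAt ℝ (fueter G) q := by
  have hGs := hasFDerivAt_comp_sliceCoord hG hq
  exact (((Complex.reCLM.hasFDerivAt.comp q hGs).smul_const (1 : ℍ[ℝ])).add
    ((Complex.imCLM.hasFDerivAt.comp q hGs).smul (hasFDerivAt_iot hq))).differentiableAt

lemma fderiv_fueter_apply (h : ℍ[ℝ]) :
    fderiv ℝ (fueter G) q h = fueter (deriv G) q * sliceEmbed (iot q) ⟨h.re, ⟪iot q, h⟫⟩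
      + ((G (sliceCoord q)).im / rad q) • (im h - ⟪iot q, h⟫ • iot q) := by
  have hGs := hasFDerivAt_comp_sliceCoord hG hq
  have hf : HasFDerivAt (fueter G) _ q :=
    ((Complex.reCLM.hasFDerivAt.comp q hGs).smul_const (1 : ℍ[ℝ])).add
      ((Complex.imCLM.hasFDerivAt.comp q hGs).smul (hasFDerivAt_iot hq))
  rw [hf.fderiv, fueter, ← sliceEmbed_mul (iot_mul_self hq), sliceEmbed]
  simp
  module

lemma pt_fueter : pt (fueter G) q = fueter (deriv G) q := by
  simp [pt, fderiv_fueter_apply hG hq, inner_iot_one, sliceEmbed]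

lemma fderiv_fueter_apply_of_re_eq_zero {e : ℍ[ℝ]} (he : e.re = 0) :
    fderiv ℝ (fueter G) q e =
      fueter (deriv G) q * (⟪iot q, e⟫ • iot q) + imDivRad G q • (e - ⟪iot q, e⟫ • iot q) := by
  simp [fderiv_fueter_apply hG hq, he, sliceEmbed, imDivRad, im_eq_self_of_re_eq_zero he]

lemma differentiableAt_imDivRad : DifferentiableAt ℝ (imDivRad G) q :=
  ((Complex.imCLM.hasFDerivAt.comp q (hasFDerivAt_comp_sliceCoord hG hq)).mul
    (hasFDerivAt_rad_inv hq)).differentiableAt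

lemma fderiv_imDivRad_apply (h : ℍ[ℝ]) :
    fderiv ℝ (imDivRad G) q h = ((deriv G (sliceCoord q) * ⟨h.re, ⟪iot q, h⟫⟩).im
      - imDivRad G q * ⟪iot q, h⟫) / rad q := by
  have hf : HasFDerivAt (imDivRad G) _ q :=
    (Complex.imCLM.hasFDerivAt.comp q (hasFDerivAt_comp_sliceCoord hG hq)).mul
      (hasFDerivAt_rad_inv hq)
  have hr := (rad_pos hq).ne'
  rw [hf.fderiv, imDivRad]
  simp
  field_simp
  ring

end FirstDerivatives

section SecondDerivatives

variable {G : ℂ → ℂ} (hG : DifferentiableOn ℂ G {z : ℂ | 0 < z.im}) {q : ℍ[ℝ]} (hq : im q ≠ 0)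
include hG hq

lemma pt_pt_fueter : pt (pt (fueter G)) q = fueter (deriv (deriv G)) q := by
  have hG' := hG.deriv (isOpen_lt continuous_const Complex.continuous_im)
  have hpt : pt (fueter G) =ᶠ[𝓝 q] fueter (deriv G) :=
    Filter.eventually_of_mem (isOpen_setOf_im_ne_zero.mem_nhds hq) fun p hp =>
      pt_fueter (hG.differentiableAt_sliceCoord hp) hp
  rw [pt, hpt.fderiv_eq]
  exact pt_fueter (hG'.differentiableAt_sliceCoord hq) hq

lemma fderiv_fderiv_fueter_of_re_eq_zero {e : ℍ[ℝ]} (he : e.re = 0) :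
    fderiv ℝ (fun p => fderiv ℝ (fueter G) p e) q e =
      -(⟪iot q, e⟫ ^ 2) • fueter (deriv (deriv G)) q
      + ((⟪e, e⟫ - ⟪iot q, e⟫ ^ 2) / rad q) • ((fueter (deriv G) q - imDivRad G q • 1) * iot q)
      + (2 * ((deriv G (sliceCoord q)).re - imDivRad G q) / rad q)
        • (⟪iot q, e⟫ • (e - ⟪iot q, e⟫ • iot q)) := by
  have hG' := hG.deriv (isOpen_lt continuous_const Complex.continuous_im)
  have hGq := hG.differentiableAt_sliceCoord hq
  have hG'q := hG'.differentiableAt_sliceCoord hq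
  have hfield : (fun p => fderiv ℝ (fueter G) p e) =ᶠ[𝓝 q] fun p =>
      fueter (deriv G) p * (⟪iot p, e⟫ • iot p) + imDivRad G p • (e - ⟪iot p, e⟫ • iot p) :=
    Filter.eventually_of_mem (isOpen_setOf_im_ne_zero.mem_nhds hq) fun p hp =>
      fderiv_fueter_apply_of_re_eq_zero (hG.differentiableAt_sliceCoord hp) hp he
  have hι := hasFDerivAt_iot hq
  have hc : HasFDerivAt (fun p => ⟪iot p, e⟫) ((innerSL ℝ e).comp _) q :=
    ((innerSL ℝ e).hasFDerivAt.comp q hι).congr_of_eventuallyEq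
      (Filter.Eventually.of_forall fun p => real_inner_comm _ _)
  have hfield' : HasFDerivAt (fun p =>
      fueter (deriv G) p * (⟪iot p, e⟫ • iot p) + imDivRad G p • (e - ⟪iot p, e⟫ • iot p)) _ q :=
    ((differentiableAt_fueter hG'q hq).hasFDerivAt.mul' (hc.smul hι)).add
      ((differentiableAt_imDivRad hGq hq).hasFDerivAt.smul ((hasFDerivAt_const e q).sub (hc.smul hι)))
  have hψ' : imDivRad (deriv G) q = (deriv G (sliceCoord q)).im / rad q := rfl
  have heι : e * iot q = -(2 * ⟪iot q, e⟫) • 1 - iot q * e := by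
    rw [eq_sub_iff_add_eq, mul_add_mul_swap_of_re_eq_zero he (re_iot q), real_inner_comm]
  rw [hfield.fderiv_eq, hfield'.fderiv]
  simp only [ContinuousLinearMap.comp_smulₛₗ, map_inv₀, Real.ringHom_apply,
    ContinuousLinearMap.comp_sub, smul_add, Pi.smul_apply', MulOpposite.op_smul, smul_assoc,
    zero_sub, neg_add_rev, smul_neg, add_apply, smul_apply, sub_apply, imCLM_apply,
    ContinuousLinearMap.smulRight_apply, coe_innerSL_apply, smul_eq_mul, Algebra.mul_smul_comm,
    ContinuousLinearMap.comp_apply, map_smul, MulOpposite.smul_eq_mul_unop, MulOpposite.unop_op,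
    neg_apply, neg_smul]
  rw [fderiv_fueter_apply_of_re_eq_zero hG'q hq he, fderiv_imDivRad_apply hGq hq,
    im_eq_self_of_re_eq_zero he, real_inner_comm (iot q) e, hψ', fueter_apply (deriv G), he]
  simp only [add_mul, mul_sub, sub_mul, smul_mul_assoc, mul_smul_comm, mul_assoc,
    iot_mul_self hq, heι, one_mul, mul_one, mul_neg, smul_add, smul_sub, smul_neg, Complex.mul_im]
  module

lemma lap_fueter :
    Lap (fueter G) q = (2 / rad q) • ((fueter (deriv G) q - imDivRad G q • 1) * iot q) := by
  have hsum := inner_smul_qi_add_qj_add_qk (iot q)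
  have hsq := inner_qi_sq_add_qj_sq_add_qk_sq (iot q)
  rw [im_iot, norm_iot hq, one_pow] at *
  rw [Lap, pt_pt_fueter hG hq]
  unfold px py pz
  rw [fderiv_fderiv_fueter_of_re_eq_zero hG hq rfl, fderiv_fderiv_fueter_of_re_eq_zero hG hq rfl,
    fderiv_fderiv_fueter_of_re_eq_zero hG hq rfl, inner_qi qi, inner_qj qj, inner_qk qk,
    imI_qi, imJ_qj, imK_qk]
  linear_combination (norm := module)
    (2 * ((deriv G (sliceCoord q)).re - imDivRad G q) / rad q) • hsum
    - hsq • (fueter (deriv (deriv G)) q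
      + (rad q)⁻¹ • ((fueter (deriv G) q - imDivRad G q • 1) * iot q)
      + (2 * ((deriv G (sliceCoord q)).re - imDivRad G q) / rad q) • iot q)

lemma dlbar_imDivRad :
    Dlbar (fun p => (imDivRad G p : ℍ[ℝ])) q =
      ((deriv G (sliceCoord q)).im / rad q) • 1
        - (((deriv G (sliceCoord q)).re - imDivRad G q) / rad q) • iot q := by
  have hGq := hG.differentiableAt_sliceCoord hq
  have hcoe : (fun p => (imDivRad G p : ℍ[ℝ])) = fun p => imDivRad G p • (1 : ℍ[ℝ]) := by
    funext p
    exact Algebra.algebraMap_eq_smul_one (R := ℝ) (A := ℍ[ℝ]) _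
  have hsum := inner_smul_qi_add_qj_add_qk (iot q)
  rw [im_iot] at hsum
  rw [Dlbar, pt, px, py, pz, hcoe,
    ((differentiableAt_imDivRad hGq hq).hasFDerivAt.smul_const _).fderiv]
  simp only [ContinuousLinearMap.smulRight_apply, fderiv_imDivRad_apply hGq hq, inner_iot_one,
    mul_smul_comm, mul_one, Complex.mul_im, re_qi, re_qj, re_qk, re_one, mul_zero, add_zero]
  linear_combination (norm := module)
    (-(((deriv G (sliceCoord q)).re - imDivRad G q) / rad q)) • hsum

end SecondDerivatives

lemma lap_congr {f g : ℍ[ℝ] → ℍ[ℝ]} {p : ℍ[ℝ]} (h : f =ᶠ[𝓝 p] g) : Lap f p = Lap g p := by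
  have hdir : ∀ v : ℍ[ℝ], (fun q => fderiv ℝ f q v) =ᶠ[𝓝 p] fun q => fderiv ℝ g q v :=
    fun v => (h.fderiv (𝕜 := ℝ)).mono fun q hq => by simp only [hq]
  unfold Lap pt px py pz
  rw [(hdir 1).fderiv_eq, (hdir qi).fderiv_eq, (hdir qj).fderiv_eq, (hdir qk).fderiv_eq]

/-- For `f` obtained from a holomorphic `F = u + iv` by Fueter's construction,
`-(1/2) Δf = D̄_l (v/r)` on the set of quaternions with nonzero imaginary part, and moreover
`-(1/2) Δf(p) = -(ι(p)/r) (∂f/∂t)(p) + (ι(p)/r²) v(t,r)`. -/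
theorem fueter_construction_laplacian
    (F : ℂ → ℂ) (hF : DifferentiableOn ℂ F {z : ℂ | 0 < z.im})
    (f : ℍ[ℝ] → ℍ[ℝ])
    (hf : ∀ p : ℍ[ℝ], Quaternion.im p ≠ 0 →
      f p = ((F ⟨p.re, rad p⟩).re : ℍ[ℝ]) + iot p * ((F ⟨p.re, rad p⟩).im : ℍ[ℝ])) :
    ∀ p : ℍ[ℝ], Quaternion.im p ≠ 0 →
      (-(1/2) : ℝ) • Lap f p =
        Dlbar (fun q => (((F ⟨q.re, rad q⟩).im / rad q : ℝ) : ℍ[ℝ])) p ∧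
      (-(1/2) : ℝ) • Lap f p =
        -(((rad p)⁻¹ • iot p) * pt f p)
          + (((rad p)^2)⁻¹ • iot p) * ((F ⟨p.re, rad p⟩).im : ℍ[ℝ]) := by
  intro p hp
  have hfp : f =ᶠ[𝓝 p] fueter F :=
    Filter.eventually_of_mem (isOpen_setOf_im_ne_zero.mem_nhds hp) fun q hq =>
      (hf q hq).trans (fueter_eq F q).symm
  have hLap := (lap_congr hfp).trans (lap_fueter hF hp)
  have hpt : pt f p = fueter (deriv F) p := by
    rw [pt, hfp.fderiv_eq]
    exact pt_fueter (hF.differentiableAt_sliceCoord hp) hp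
  refine ⟨(dlbar_imDivRad hF hp).symm ▸ ?_, ?_⟩
  · rw [hLap, fueter_apply]
    simp only [add_mul, sub_mul, smul_mul_assoc, one_mul, iot_mul_self hp]
    module
  · rw [hLap, hpt, fueter_apply, mul_coe_eq_smul]
    simp only [imDivRad, sliceCoord, mul_add, add_mul, sub_mul, smul_mul_assoc, mul_smul_comm,
      one_mul, mul_one, iot_mul_self hp]
    module
end
end

section
/- Let u, v be real-valued C¹ functions of (α,β) on a region where sin β ≠ 0, and let F = u + ι(α,β)·v. If ∂F/∂ιₗ = 2v, then ∂(ι·F)/∂ιₗ = 2u. -/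
/-! Since `ι` is a unit imaginary quaternion, `ι² = -1`; differentiating this identity shows that
`ι` anticommutes with `ι_α` and `ι_β`, hence with their inverses. Moving `ι` past `ι_α⁻¹` and
`ι_β⁻¹` in the product rule for `ι F` gives `∂(ι F)/∂ιₗ = 2 F - ι ∂F/∂ιₗ = 2 F - 2 ι v = 2 u`. -/

open Quaternion

noncomputable section

/-- `ι(α,β) = cos α sin β · i + sin α sin β · j + cos β · k`, a unit imaginary quaternion. -/
def iota (α β : ℝ) : ℍ[ℝ] :=
  ⟨0, Real.cos α * Real.sin β, Real.sin α * Real.sin β, Real.cos β⟩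
/-- `ι_α = ∂ι/∂α`. -/
def iotaA (α β : ℝ) : ℍ[ℝ] := deriv (fun a => iota a β) α
/-- `ι_β = ∂ι/∂β`. -/
def iotaB (α β : ℝ) : ℍ[ℝ] := deriv (fun b => iota α b) β

/-- Partial derivative in `α` of a quaternion-valued function of `(α,β)`. -/
def pA (g : ℝ → ℝ → ℍ[ℝ]) (α β : ℝ) : ℍ[ℝ] := deriv (fun a => g a β) α
/-- Partial derivative in `β` of a quaternion-valued function of `(α,β)`. -/
def pB (g : ℝ → ℝ → ℍ[ℝ]) (α β : ℝ) : ℍ[ℝ] := deriv (fun b => g α b) β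
/-- The left angular derivative `∂g/∂ιₗ := ι_α⁻¹ (∂g/∂α) + ι_β⁻¹ (∂g/∂β)`. -/
def DI (g : ℝ → ℝ → ℍ[ℝ]) (α β : ℝ) : ℍ[ℝ] :=
  (iotaA α β)⁻¹ * pA g α β + (iotaB α β)⁻¹ * pB g α β

theorem inv_mul_mul_add_mul_of_anticomm {R : Type*} [DivisionRing R] {a i : R}
    (ha : a ≠ 0) (h : a * i = -(i * a)) (x y : R) :
    a⁻¹ * (a * x + i * y) = x - i * (a⁻¹ * y) := by
  have h' : a⁻¹ * -i = i * a⁻¹ := SemiconjBy.inv_symm_left₀ (by simpa [SemiconjBy] using h)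
  rw [mul_add, inv_mul_cancel_left₀ ha, ← mul_assoc, ← neg_neg i, mul_neg, h']
  noncomm_ring

theorem HasDerivAt.anticomm_of_mul_self_eq {𝕜 𝔸 : Type*} [NontriviallyNormedField 𝕜]
    [NormedRing 𝔸] [NormedAlgebra 𝕜 𝔸] {f : 𝕜 → 𝔸} {f' c : 𝔸} {x : 𝕜}
    (hf : HasDerivAt f f' x) (hc : ∀ t, f t * f t = c) :
    f' * f x = -(f x * f') := by
  have hconst : HasDerivAt (fun t => f t * f t) 0 x := by
    simpa only [hc] using hasDerivAt_const x c
  exact eq_neg_of_add_eq_zero_left ((hf.mul hf).unique hconst)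

namespace Quaternion

-- `F` is pinned: an anonymous constructor alone is typed in `QuaternionAlgebra ℝ (-1) 0 (-1)`,
-- which carries no norm.
theorem hasDerivAt_mk {f₀ f₁ f₂ f₃ : ℝ → ℝ} {f₀' f₁' f₂' f₃' x : ℝ}
    (h₀ : HasDerivAt f₀ f₀' x) (h₁ : HasDerivAt f₁ f₁' x) (h₂ : HasDerivAt f₂ f₂' x)
    (h₃ : HasDerivAt f₃ f₃' x) :
    HasDerivAt (F := ℍ[ℝ]) (fun t => ⟨f₀ t, f₁ t, f₂ t, f₃ t⟩) ⟨f₀', f₁', f₂', f₃'⟩ x := by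
  let i : ℍ[ℝ] := ⟨0, 1, 0, 0⟩
  let j : ℍ[ℝ] := ⟨0, 0, 1, 0⟩
  let k : ℍ[ℝ] := ⟨0, 0, 0, 1⟩
  have hsum := (((h₀.smul_const (1 : ℍ[ℝ])).add (h₁.smul_const i)).add
    (h₂.smul_const j)).add (h₃.smul_const k)
  refine (hsum.congr_deriv ?_).congr_of_eventuallyEq (.of_forall fun t => ?_) <;>
    ext <;> simp [re_smul] <;> simp [i, j, k]

theorem differentiableAt_coe_comp {f : ℝ → ℝ} {x : ℝ} (hf : DifferentiableAt ℝ f x) :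
    DifferentiableAt ℝ (fun t => (f t : ℍ[ℝ])) x :=
  (algebraMapCLM ℝ ℍ[ℝ]).differentiableAt.comp x hf

end Quaternion

theorem DifferentiableAt.partial_fst {E : Type*} [NormedAddCommGroup E] [NormedSpace ℝ E]
    {f : ℝ → ℝ → E} {α β : ℝ} (hf : DifferentiableAt ℝ (fun x : ℝ × ℝ => f x.1 x.2) (α, β)) :
    DifferentiableAt ℝ (fun a => f a β) α :=
  hf.comp (f := fun a => (a, β)) α (by fun_prop)

theorem DifferentiableAt.partial_snd {E : Type*} [NormedAddCommGroup E] [NormedSpace ℝ E]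
    {f : ℝ → ℝ → E} {α β : ℝ} (hf : DifferentiableAt ℝ (fun x : ℝ × ℝ => f x.1 x.2) (α, β)) :
    DifferentiableAt ℝ (fun b => f α b) β :=
  hf.comp (f := fun b => (α, b)) β (by fun_prop)

theorem iota_mul_self (α β : ℝ) : iota α β * iota α β = -1 := by
  ext <;> simp [re_mul, imI_mul, imJ_mul, imK_mul] <;> simp [iota] <;>
    nlinarith [Real.sin_sq_add_cos_sq α, Real.sin_sq_add_cos_sq β]

theorem hasDerivAt_iota_fst (α β : ℝ) :
    HasDerivAt (fun a => iota a β)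
      ⟨0, -Real.sin α * Real.sin β, Real.cos α * Real.sin β, 0⟩ α :=
  Quaternion.hasDerivAt_mk (hasDerivAt_const α 0)
    ((Real.hasDerivAt_cos α).mul_const (Real.sin β))
    ((Real.hasDerivAt_sin α).mul_const (Real.sin β)) (hasDerivAt_const α (Real.cos β))

theorem hasDerivAt_iota_snd (α β : ℝ) :
    HasDerivAt (fun b => iota α b)
      ⟨0, Real.cos α * Real.cos β, Real.sin α * Real.cos β, -Real.sin β⟩ β :=
  Quaternion.hasDerivAt_mk (hasDerivAt_const β 0)
    ((Real.hasDerivAt_sin β).const_mul (Real.cos α))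
    ((Real.hasDerivAt_sin β).const_mul (Real.sin α)) (Real.hasDerivAt_cos β)

theorem iotaA_ne_zero {α β : ℝ} (hβ : Real.sin β ≠ 0) : iotaA α β ≠ 0 := by
  rw [iotaA, (hasDerivAt_iota_fst α β).deriv]
  intro h
  have hsin : Real.sin α = 0 := by simpa [hβ] using congrArg (·.imI) h
  have hcos : Real.cos α = 0 := by simpa [hβ] using congrArg (·.imJ) h
  simpa [hsin, hcos] using Real.sin_sq_add_cos_sq α

theorem iotaB_ne_zero {α β : ℝ} (hβ : Real.sin β ≠ 0) : iotaB α β ≠ 0 := by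
  rw [iotaB, (hasDerivAt_iota_snd α β).deriv]
  intro h
  exact hβ (by simpa using congrArg (·.imK) h)

theorem iotaA_mul_iota (α β : ℝ) : iotaA α β * iota α β = -(iota α β * iotaA α β) :=
  (hasDerivAt_iota_fst α β).differentiableAt.hasDerivAt.anticomm_of_mul_self_eq
    fun a => iota_mul_self a β

theorem iotaB_mul_iota (α β : ℝ) : iotaB α β * iota α β = -(iota α β * iotaB α β) :=
  (hasDerivAt_iota_snd α β).differentiableAt.hasDerivAt.anticomm_of_mul_self_eq
    fun b => iota_mul_self α b

theorem DI_iota_mul {g : ℝ → ℝ → ℍ[ℝ]} {α β : ℝ} (hβ : Real.sin β ≠ 0)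
    (hgα : DifferentiableAt ℝ (fun a => g a β) α) (hgβ : DifferentiableAt ℝ (fun b => g α b) β) :
    DI (fun a b => iota a b * g a b) α β = 2 * g α β - iota α β * DI g α β := by
  have hpA : pA (fun a b => iota a b * g a b) α β = iotaA α β * g α β + iota α β * pA g α β :=
    deriv_fun_mul (hasDerivAt_iota_fst α β).differentiableAt hgα
  have hpB : pB (fun a b => iota a b * g a b) α β = iotaB α β * g α β + iota α β * pB g α β :=
    deriv_fun_mul (hasDerivAt_iota_snd α β).differentiableAt hgβ
  rw [DI, DI, hpA, hpB,
    inv_mul_mul_add_mul_of_anticomm (iotaA_ne_zero hβ) (iotaA_mul_iota α β),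
    inv_mul_mul_add_mul_of_anticomm (iotaB_ne_zero hβ) (iotaB_mul_iota α β)]
  noncomm_ring

/-- For real-valued `C¹` functions `u, v` of `(α,β)` on a region where
`sin β ≠ 0` and `F = u + ι v`, if `∂F/∂ιₗ = 2v` then `∂(ι F)/∂ιₗ = 2u`. -/
theorem angular_deriv_iota_mul_eq (S : Set (ℝ × ℝ)) (hS : IsOpen S)
    (hSsin : ∀ x ∈ S, Real.sin x.2 ≠ 0)
    (u v : ℝ → ℝ → ℝ)
    (hu : ContDiffOn ℝ 1 (fun x : ℝ × ℝ => u x.1 x.2) S)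
    (hv : ContDiffOn ℝ 1 (fun x : ℝ × ℝ => v x.1 x.2) S)
    (heq : ∀ x ∈ S,
      DI (fun a b => ((u a b : ℝ) : ℍ[ℝ]) + iota a b * ((v a b : ℝ) : ℍ[ℝ])) x.1 x.2
        = ((2 * v x.1 x.2 : ℝ) : ℍ[ℝ])) :
    ∀ x ∈ S,
      DI (fun a b => iota a b * (((u a b : ℝ) : ℍ[ℝ]) + iota a b * ((v a b : ℝ) : ℍ[ℝ]))) x.1 x.2
        = ((2 * u x.1 x.2 : ℝ) : ℍ[ℝ]) := by
  rintro ⟨α, β⟩ hx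
  have hdiff {w : ℝ → ℝ → ℝ} (hw : ContDiffOn ℝ 1 (fun x : ℝ × ℝ => w x.1 x.2) S) :
      DifferentiableAt ℝ (fun x : ℝ × ℝ => w x.1 x.2) (α, β) :=
    (hw.contDiffAt (hS.mem_nhds hx)).differentiableAt one_ne_zero
  have hFα := (Quaternion.differentiableAt_coe_comp (hdiff hu).partial_fst).add
    ((hasDerivAt_iota_fst α β).differentiableAt.mul
      (Quaternion.differentiableAt_coe_comp (hdiff hv).partial_fst))
  have hFβ := (Quaternion.differentiableAt_coe_comp (hdiff hu).partial_snd).add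
    ((hasDerivAt_iota_snd α β).differentiableAt.mul
      (Quaternion.differentiableAt_coe_comp (hdiff hv).partial_snd))
  rw [DI_iota_mul (hSsin _ hx) hFα hFβ, heq _ hx]
  have h2 : ((2 : ℝ) : ℍ[ℝ]) = 2 := rfl
  simp only [Quaternion.coe_mul, h2]
  noncomm_ring
end
end

section
/- For all (α,β) with sin β ≠ 0, the quaternion-valued derivatives of ι(α,β) satisfy ι_α⁻¹·∂(ι_α⁻¹)/∂α + ι_β⁻¹·∂(ι_α⁻¹)/∂β = −ι·ι_α⁻¹. -/
/-!
Write `ι_α = sin β · e` with `e = -sin α i + cos α j`. Both `e` and `ι_β` are unit pure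
quaternions, so `ι_α⁻¹ = -(sin β)⁻¹ e` and `ι_β⁻¹ = -ι_β`. Both partial derivatives of `ι_α⁻¹`
are then real derivatives times fixed quaternions, and the identity becomes a componentwise
computation in which only `sin² β + cos² β = 1` is needed.
-/

open Quaternion

noncomputable section

-- `(⟨a, b, c, d⟩ : ℍ[ℝ])` elaborates at the unfolded type `QuaternionAlgebra ℝ (-1) 0 (-1)`,
-- which carries no norm, so literals are built through `quat` instead.
@[simps]
def quat (a b c d : ℝ) : ℍ[ℝ] := ⟨a, b, c, d⟩

theorem quat_eq_sum (a b c d : ℝ) :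
    quat a b c d = a • quat 1 0 0 0 + b • quat 0 1 0 0 + c • quat 0 0 1 0 + d • quat 0 0 0 1 := by
  ext <;> simp

theorem hasDerivAt_quat {f₀ f₁ f₂ f₃ : ℝ → ℝ} {f₀' f₁' f₂' f₃' x : ℝ}
    (h₀ : HasDerivAt f₀ f₀' x) (h₁ : HasDerivAt f₁ f₁' x) (h₂ : HasDerivAt f₂ f₂' x)
    (h₃ : HasDerivAt f₃ f₃' x) :
    HasDerivAt (fun t => quat (f₀ t) (f₁ t) (f₂ t) (f₃ t)) (quat f₀' f₁' f₂' f₃') x := by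
  have hsum := (((h₀.smul_const (quat 1 0 0 0)).add (h₁.smul_const (quat 0 1 0 0))).add
    (h₂.smul_const (quat 0 0 1 0))).add (h₃.smul_const (quat 0 0 0 1))
  exact (hsum.congr_deriv (quat_eq_sum ..).symm).congr_of_eventuallyEq
    (.of_forall fun t => quat_eq_sum ..)

theorem Quaternion.inv_eq_neg_of_re_eq_zero_of_normSq_eq_one {R : Type*} [Field R] [LinearOrder R]
    [IsStrictOrderedRing R] {u : ℍ[R]} (hre : u.re = 0) (hu : normSq u = 1) : u⁻¹ = -u := by
  rw [inv_def, hu, inv_one, one_smul, star_eq_neg.2 hre]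

open Real

theorem iota_eq_quat (α β : ℝ) :
    iota α β = quat 0 (cos α * sin β) (sin α * sin β) (cos β) :=
  rfl

theorem iotaA_eq (α β : ℝ) : iotaA α β = sin β • quat 0 (-sin α) (cos α) 0 := by
  have h := hasDerivAt_quat (hasDerivAt_const α 0) ((hasDerivAt_cos α).mul_const (sin β))
    ((hasDerivAt_sin α).mul_const (sin β)) (hasDerivAt_const α (cos β))
  refine h.deriv.trans ?_
  ext <;> simp [mul_comm]

theorem iotaB_eq (α β : ℝ) :
    iotaB α β = quat 0 (cos α * cos β) (sin α * cos β) (-sin β) :=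
  (hasDerivAt_quat (hasDerivAt_const β 0) ((hasDerivAt_sin β).const_mul (cos α))
    ((hasDerivAt_sin β).const_mul (sin α)) (hasDerivAt_cos β)).deriv

theorem inv_iotaA (α β : ℝ) : (iotaA α β)⁻¹ = (sin β)⁻¹ • quat 0 (sin α) (-cos α) 0 := by
  rw [iotaA_eq, smul_inv₀, inv_eq_neg_of_re_eq_zero_of_normSq_eq_one rfl]
  · ext <;> simp
  · simp [normSq_def', sin_sq_add_cos_sq]

theorem inv_iotaB (α β : ℝ) : (iotaB α β)⁻¹ = -iotaB α β := by
  refine inv_eq_neg_of_re_eq_zero_of_normSq_eq_one (by rw [iotaB_eq]; rfl) ?_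
  rw [iotaB_eq, normSq_def']
  simp only [re_quat, imI_quat, imJ_quat, imK_quat]
  linear_combination (cos β ^ 2) * sin_sq_add_cos_sq α + sin_sq_add_cos_sq β

theorem hasDerivAt_inv_iotaA_fst (α β : ℝ) :
    HasDerivAt (fun a => (iotaA a β)⁻¹) ((sin β)⁻¹ • quat 0 (cos α) (sin α) 0) α := by
  simp only [inv_iotaA]
  have hcos : HasDerivAt (fun a => -cos a) (sin α) α := by simpa using (hasDerivAt_cos α).fun_neg
  exact (hasDerivAt_quat (hasDerivAt_const α 0) (hasDerivAt_sin α) hcos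
    (hasDerivAt_const α 0)).fun_const_smul _

theorem hasDerivAt_inv_iotaA_snd (α : ℝ) {β : ℝ} (h : sin β ≠ 0) :
    HasDerivAt (fun b => (iotaA α b)⁻¹)
      ((-cos β / sin β ^ 2) • quat 0 (sin α) (-cos α) 0) β := by
  simp only [inv_iotaA]
  exact ((hasDerivAt_sin β).inv h).smul_const _

/-- For `sin β ≠ 0`,
`ι_α⁻¹ ∂(ι_α⁻¹)/∂α + ι_β⁻¹ ∂(ι_α⁻¹)/∂β = -ι ι_α⁻¹`. -/
theorem iota_inv_derivative_identity (α β : ℝ) (h : Real.sin β ≠ 0) :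
    (iotaA α β)⁻¹ * deriv (fun a => (iotaA a β)⁻¹) α
        + (iotaB α β)⁻¹ * deriv (fun b => (iotaA α b)⁻¹) β
      = -(iota α β * (iotaA α β)⁻¹) := by
  rw [(hasDerivAt_inv_iotaA_fst α β).deriv, (hasDerivAt_inv_iotaA_snd α h).deriv, inv_iotaB,
    inv_iotaA, iotaB_eq, iota_eq_quat]
  ext <;> simp only [re_add, imI_add, imJ_add, imK_add, re_neg, imI_neg, imJ_neg, imK_neg,
    re_mul, imI_mul, imJ_mul, imK_mul, re_smul, imI_smul, imJ_smul, imK_smul,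
    re_quat, imI_quat, imJ_quat, imK_quat, smul_eq_mul] <;> field_simp
  · ring
  · ring
  · ring
  · linear_combination -(sin α ^ 2 + cos α ^ 2) * sin_sq_add_cos_sq β
end
end
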